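/- For every positive integer n, the derivative of the polynomial Pₙ is given by Pₙ′(x) = ∑_{k=1}^{n} (σ₂(k)/k) · P_{n−k}(x). -/
import Mathlib


/-- `σ₂(n) = ∑_{d ∣ n} d²`, the sum of the squares of the divisors of `n`. -/
def sigma2 (n : ℕ) : ℕ := ∑ d ∈ n.divisors, d ^ 2

/-- The polynomials `Pₙ`, defined by `P 0 = 1` and
`Pₙ(x) = (x/n) ∑_{k=1}^{n} σ₂(k) · P_{n−k}(x)` for `n ≥ 1`.
They satisfy `Pₙ(1) = pp(n)`, the number of plane partitions of `n`. -/
noncomputable def P : ℕ → Polynomial ℝ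
  | 0 => 1
  | n + 1 => Polynomial.C (((n : ℝ) + 1)⁻¹) * Polynomial.X *
      ∑ k ∈ Finset.range (n + 1), Polynomial.C ((sigma2 (k + 1) : ℝ)) * P (n - k)

open Polynomial Finset

lemma P_eq (n : ℕ) (hn : 0 < n) :
    P n = C ((n : ℝ))⁻¹ * X * ∑ k ∈ Icc 1 n, C ((sigma2 k : ℝ)) * P (n - k) := by
  obtain ⟨m, rfl⟩ : ∃ m, n = m + 1 := ⟨n - 1, by omega⟩
  rw [P, ← Finset.Ico_add_one_right_eq_Icc, Finset.sum_Ico_eq_sum_range]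
  simp only [show m + 1 + 1 - 1 = m + 1 from rfl]
  push_cast
  congr 1
  refine Finset.sum_congr rfl fun i hi => ?_
  rw [show 1 + i = i + 1 from by omega, show m + 1 - (i + 1) = m - i from by omega]


/-- For every positive integer `n`, the derivative of `P n` is
`∑_{k=1}^{n} (σ₂(k)/k) · P (n-k)`. -/
theorem P_derivative (n : ℕ) (hn : 0 < n) :
    Polynomial.derivative (P n) =
      ∑ k ∈ Finset.Icc 1 n, Polynomial.C ((sigma2 k : ℝ) / k) * P (n - k) := by
  revert hn
  induction n using Nat.strong_induction_on with
  | _ n ih =>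
  intro hn
  have hn0 : ((n : ℝ)) ≠ 0 := Nat.cast_ne_zero.mpr (by omega)
  set S : Polynomial ℝ := ∑ k ∈ Icc 1 n, C ((sigma2 k : ℝ)) * P (n - k) with hS
  set T : Polynomial ℝ := ∑ k ∈ Icc 1 n, C ((sigma2 k : ℝ) / k) * P (n - k) with hT
  -- claim 1: derivative of P (n - k)
  have claim1 : ∀ k ∈ Icc 1 n, derivative (P (n - k)) =
      ∑ j ∈ Icc 1 (n - k), C ((sigma2 j : ℝ) / j) * P (n - k - j) := by
    intro k hk
    simp only [mem_Icc] at hk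
    rcases hk.2.eq_or_lt with h | h
    · rw [h, Nat.sub_self]
      simp [P]
    · exact ih (n - k) (by omega) (by omega)
  -- claim 2
  have claim2 : ∀ k ∈ Icc 1 n, C ((n : ℝ) - k) * P (n - k) =
      X * ∑ j ∈ Icc 1 (n - k), C ((sigma2 j : ℝ)) * P (n - k - j) := by
    intro k hk
    simp only [mem_Icc] at hk
    rcases hk.2.eq_or_lt with h | h
    · rw [h, Nat.sub_self]
      simp
    · have hc : ((n : ℝ) - k) = ((n - k : ℕ) : ℝ) := by
        rw [Nat.cast_sub hk.2]
      have hne : ((n - k : ℕ) : ℝ) ≠ 0 := Nat.cast_ne_zero.mpr (by omega)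
      rw [hc, P_eq (n - k) (by omega),
        show C ((n - k : ℕ) : ℝ) * (C ((n - k : ℕ) : ℝ)⁻¹ * X *
            ∑ j ∈ Icc 1 (n - k), C ((sigma2 j : ℝ)) * P (n - k - j)) =
          (C ((n - k : ℕ) : ℝ) * C ((n - k : ℕ) : ℝ)⁻¹) *
            (X * ∑ j ∈ Icc 1 (n - k), C ((sigma2 j : ℝ)) * P (n - k - j)) from by ring,
        ← C_mul, mul_inv_cancel₀ hne, C_1, one_mul]
  -- derivative of S
  have hS' : derivative S = ∑ k ∈ Icc 1 n, C ((sigma2 k : ℝ)) *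
      ∑ j ∈ Icc 1 (n - k), C ((sigma2 j : ℝ) / j) * P (n - k - j) := by
    rw [hS, map_sum]
    refine Finset.sum_congr rfl fun k hk => ?_
    rw [derivative_C_mul, claim1 k hk]
  -- the symmetric double sum swap
  have swap : ∑ k ∈ Icc 1 n, ∑ j ∈ Icc 1 (n - k),
        C ((sigma2 k : ℝ)) * C ((sigma2 j : ℝ) / j) * X * P (n - k - j) =
      ∑ k ∈ Icc 1 n, ∑ j ∈ Icc 1 (n - k),
        C ((sigma2 k : ℝ) / k) * C ((sigma2 j : ℝ)) * X * P (n - k - j) := by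
    have hfil : ∀ k ∈ Icc 1 n, ∀ f : ℕ → Polynomial ℝ,
        ∑ j ∈ Icc 1 (n - k), f j = ∑ j ∈ Icc 1 n, if k + j ≤ n then f j else 0 := by
      intro k hk f
      simp only [mem_Icc] at hk
      rw [← Finset.sum_filter]
      refine Finset.sum_congr ?_ fun _ _ => rfl
      ext j
      simp only [mem_Icc, mem_filter]
      omega
    rw [Finset.sum_congr rfl fun k hk => hfil k hk _,
        Finset.sum_congr rfl fun k hk => hfil k hk _, Finset.sum_comm]
    refine Finset.sum_congr rfl fun k _ => Finset.sum_congr rfl fun j _ => ?_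
    rw [show j + k = k + j from by omega]
    split_ifs with h
    · rw [show n - j - k = n - k - j from by omega]; ring
    · rfl
  -- key identity
  have e1 : C ((n : ℝ)) * T = S +
      ∑ k ∈ Icc 1 n, C ((sigma2 k : ℝ) / k) * (C ((n : ℝ) - k) * P (n - k)) := by
    rw [hT, hS, Finset.mul_sum, ← Finset.sum_add_distrib]
    refine Finset.sum_congr rfl fun k hk => ?_
    simp only [mem_Icc] at hk
    have hk0 : ((k : ℝ)) ≠ 0 := Nat.cast_ne_zero.mpr (by omega)
    have hr : (n : ℝ) * ((sigma2 k : ℝ) / k) =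
        (sigma2 k : ℝ) + (sigma2 k : ℝ) / k * ((n : ℝ) - k) := by
      field_simp
      ring
    calc C ((n : ℝ)) * (C ((sigma2 k : ℝ) / k) * P (n - k))
        = C ((n : ℝ) * ((sigma2 k : ℝ) / k)) * P (n - k) := by rw [← mul_assoc, ← C_mul]
      _ = C ((sigma2 k : ℝ) + (sigma2 k : ℝ) / k * ((n : ℝ) - k)) * P (n - k) := by rw [hr]
      _ = C ((sigma2 k : ℝ)) * P (n - k) +
            C ((sigma2 k : ℝ) / k) * (C ((n : ℝ) - k) * P (n - k)) := by
          rw [C_add, add_mul, C_mul]; ring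
  have key : S + X * derivative S = C ((n : ℝ)) * T := by
    rw [e1]
    congr 1
    rw [hS', Finset.mul_sum]
    calc ∑ k ∈ Icc 1 n, X * (C ((sigma2 k : ℝ)) *
            ∑ j ∈ Icc 1 (n - k), C ((sigma2 j : ℝ) / j) * P (n - k - j))
        = ∑ k ∈ Icc 1 n, ∑ j ∈ Icc 1 (n - k),
            C ((sigma2 k : ℝ)) * C ((sigma2 j : ℝ) / j) * X * P (n - k - j) := by
          refine Finset.sum_congr rfl fun k _ => ?_
          rw [Finset.mul_sum, Finset.mul_sum]
          exact Finset.sum_congr rfl fun j _ => by ring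
      _ = ∑ k ∈ Icc 1 n, ∑ j ∈ Icc 1 (n - k),
            C ((sigma2 k : ℝ) / k) * C ((sigma2 j : ℝ)) * X * P (n - k - j) := swap
      _ = ∑ k ∈ Icc 1 n, C ((sigma2 k : ℝ) / k) *
            (X * ∑ j ∈ Icc 1 (n - k), C ((sigma2 j : ℝ)) * P (n - k - j)) := by
          refine Finset.sum_congr rfl fun k _ => ?_
          rw [Finset.mul_sum, Finset.mul_sum]
          exact Finset.sum_congr rfl fun j _ => by ring
      _ = ∑ k ∈ Icc 1 n, C ((sigma2 k : ℝ) / k) * (C ((n : ℝ) - k) * P (n - k)) := by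
          exact Finset.sum_congr rfl fun k hk => by rw [claim2 k hk]
  -- assemble
  rw [P_eq n hn, ← hS]
  rw [derivative_mul, derivative_mul, derivative_C, derivative_X]
  calc (0 * X + C ((n:ℝ))⁻¹ * 1) * S + C ((n:ℝ))⁻¹ * X * derivative S
      = C ((n:ℝ))⁻¹ * (S + X * derivative S) := by ring
    _ = C ((n:ℝ))⁻¹ * (C ((n : ℝ)) * T) := by rw [key]
    _ = T := by rw [← mul_assoc, ← C_mul, inv_mul_cancel₀ hn0, C_1, one_mul]
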